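/- arXiv:math/0609655 — 3 statements merged into one kernel-verified Lean document; each statement's English description precedes it below -/
import Mathlib

section
/- Let I be a fine normal ideal on κ, ζ an ordinal, and S ⊆ κ an I-positive set. If nonempty has a winning strategy in the Banach–Mazur game BM_{<ζ}(I,S), then nonempty has a winning strategy in the pressing down game PD_{<ζ}(I,S). (That is, it is at least as hard for nonempty to win BM as to win PD.) -/
open Set

noncomputable section

namespace BMPDGames

/-- `I` is an ideal on the (regular uncountable) ordinal `κ`:  a collection of subsets of
`κ` containing all singletons, closed under subsets and finite unions, with `κ ∉ I`. -/
def IsIdealOn (κ : Ordinal) (I : Set (Set Ordinal)) : Prop :=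
  (∀ A ∈ I, A ⊆ Set.Iio κ) ∧
  (∀ β < κ, ({β} : Set Ordinal) ∈ I) ∧
  (∀ A B : Set Ordinal, A ⊆ B → B ∈ I → A ∈ I) ∧
  (∀ A ∈ I, ∀ B ∈ I, A ∪ B ∈ I) ∧
  Set.Iio κ ∉ I

/-- `I` is fine: every bounded subset of `κ` belongs to `I`. -/
def IsFineIdeal (κ : Ordinal) (I : Set (Set Ordinal)) : Prop :=
  ∀ A : Set Ordinal, A ⊆ Set.Iio κ → (∃ β < κ, A ⊆ Set.Iio β) → A ∈ I

/-- `I` is normal: the diagonal union of `κ` many members of `I` belongs to `I`. -/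
def IsNormalIdeal (κ : Ordinal) (I : Set (Set Ordinal)) : Prop :=
  ∀ A : Ordinal → Set Ordinal, (∀ γ, γ < κ → A γ ∈ I) →
    {β : Ordinal | β < κ ∧ ∃ γ < β, β ∈ A γ} ∈ I

/-- `I` is a fine normal ideal on `κ`. -/
def FineNormalIdeal (κ : Ordinal) (I : Set (Set Ordinal)) : Prop :=
  IsIdealOn κ I ∧ IsFineIdeal κ I ∧ IsNormalIdeal κ I

/-- `κ` is (as an ordinal) a regular uncountable cardinal. -/
def RegUncountable (κ : Ordinal) : Prop :=
  κ.card.IsRegular ∧ Cardinal.aleph0 < κ.card ∧ κ.card.ord = κ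

/-- `C` is a club (closed unbounded) subset of `κ`: it is closed under suprema of its
bounded nonempty subsets and unbounded in `κ`. -/
def IsClubIn (κ : Ordinal) (C : Set Ordinal) : Prop :=
  C ⊆ Set.Iio κ ∧
  (∀ D : Set Ordinal, D ⊆ C → D.Nonempty → sSup D < κ → sSup D ∈ C) ∧
  (∀ β, β < κ → ∃ γ ∈ C, β < γ)

/-- `S` is a stationary subset of `κ`: it meets every club. -/
def IsStationaryIn (κ : Ordinal) (S : Set Ordinal) : Prop :=
  S ⊆ Set.Iio κ ∧ ∀ C : Set Ordinal, IsClubIn κ C → (S ∩ C).Nonempty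

/-- The nonstationary ideal on `κ`: subsets of `κ` disjoint from some club. -/
def NSIdeal (κ : Ordinal) : Set (Set Ordinal) :=
  {A | A ⊆ Set.Iio κ ∧ ∃ C : Set Ordinal, IsClubIn κ C ∧ A ∩ C = ∅}

/-- `E^κ_ω`, the set of ordinals below `κ` of cofinality `ω`. -/
def Ecofomega (κ : Ordinal) : Set Ordinal :=
  {α : Ordinal | α < κ ∧ Ordinal.cof α = Cardinal.aleph0}

/-- The intersection of the values `T β` for `β < α`. -/
def InterBelow (T : Ordinal → Set Ordinal) (α : Ordinal) : Set Ordinal :=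
  ⋂ β ∈ Set.Iio α, T β

/-! ### The Banach–Mazur game `BM_{<ζ}(I,S)` (empty moves first at every stage).

A strategy for a player is represented as a function giving that player's move at stage `α`
as a function of the opponent's moves (it may only depend on the moves made before the
player's move at stage `α`, which is the first conjunct in each definition below).  A
strategy is winning if it always produces legal moves (as long as the opponent has played
legally and the game is not yet over) and every run in which the opponent plays legally is
won by the player. -/

/-- `σ` is a winning strategy for the player *empty* in `BM_{<ζ}(I,S)`.
Here `T : Ordinal → Set Ordinal` ranges over the sequences of moves of nonempty, and
empty's move at stage `α` is `σ α T`. Empty wins a run iff at some stage `α < ζ`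
the intersection of all moves made before stage `α` belongs to `I`. -/
def EmptyBMStratWins (ζ : Ordinal) (I : Set (Set Ordinal)) (S : Set Ordinal)
    (σ : Ordinal → (Ordinal → Set Ordinal) → Set Ordinal) : Prop :=
  (∀ (α : Ordinal) (T T' : Ordinal → Set Ordinal),
      (∀ β < α, T β = T' β) → σ α T = σ α T') ∧
  ∀ T : Ordinal → Set Ordinal,
    (∀ α < ζ, (∀ β < α, T β ∉ I ∧ T β ⊆ σ β T) → InterBelow T α ∉ I →
      σ α T ∉ I ∧ σ α T ⊆ S ∧ ∀ β < α, σ α T ⊆ T β) ∧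
    ((∀ α < ζ, T α ∉ I ∧ T α ⊆ σ α T) → ∃ α < ζ, InterBelow T α ∈ I)

/-- Empty has a winning strategy in `BM_{<ζ}(I,S)`. -/
def EmptyWinsBM (ζ : Ordinal) (I : Set (Set Ordinal)) (S : Set Ordinal) : Prop :=
  ∃ σ, EmptyBMStratWins ζ I S σ

/-- Nonempty has a winning strategy in `BM_{<ζ}(I,S)`.
Here `Sq : Ordinal → Set Ordinal` ranges over the sequences of moves of empty, and
nonempty's move at stage `α` is `τ α Sq`.  The strategy must respond legally to legal
play by empty, and guarantee that empty is never stuck, i.e. that the intersection of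
all previous moves never lies in `I` at any stage `α < ζ`. -/
def NonemptyWinsBM (ζ : Ordinal) (I : Set (Set Ordinal)) (S : Set Ordinal) : Prop :=
  ∃ τ : Ordinal → (Ordinal → Set Ordinal) → Set Ordinal,
    (∀ (α : Ordinal) (Sq Sq' : Ordinal → Set Ordinal),
        (∀ β ≤ α, Sq β = Sq' β) → τ α Sq = τ α Sq') ∧
    ∀ Sq : Ordinal → Set Ordinal, ∀ α, α < ζ →
      ((∀ β ≤ α, Sq β ∉ I ∧ Sq β ⊆ S ∧ ∀ γ < β, Sq β ⊆ Sq γ ∩ τ γ Sq) →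
        τ α Sq ∉ I ∧ τ α Sq ⊆ Sq α) ∧
      ((∀ β < α, Sq β ∉ I ∧ Sq β ⊆ S ∧ ∀ γ < β, Sq β ⊆ Sq γ ∩ τ γ Sq) →
        InterBelow (fun β => Sq β ∩ τ β Sq) α ∉ I)

/-! ### The variant `BM'_{<ζ}(I,S)` in which nonempty makes the first move at stage `0`
(playing an `I`-positive `T 0 ⊆ S`), after which play continues as in `BM` with empty
moving first at every later stage. -/

/-- `σ` is a winning strategy for empty in `BM'_{<ζ}(I,S)` (`σ` is only used at
stages `α > 0`, since nonempty alone moves at stage `0`). -/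
def EmptyBMPrimeStratWins (ζ : Ordinal) (I : Set (Set Ordinal)) (S : Set Ordinal)
    (σ : Ordinal → (Ordinal → Set Ordinal) → Set Ordinal) : Prop :=
  (∀ (α : Ordinal) (T T' : Ordinal → Set Ordinal),
      (∀ β < α, T β = T' β) → σ α T = σ α T') ∧
  ∀ T : Ordinal → Set Ordinal,
    (∀ α, 0 < α → α < ζ → (T 0 ∉ I ∧ T 0 ⊆ S) →
      (∀ β, 0 < β → β < α → T β ∉ I ∧ T β ⊆ σ β T) → InterBelow T α ∉ I →
      σ α T ∉ I ∧ ∀ β < α, σ α T ⊆ T β) ∧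
    ((0 < ζ → T 0 ∉ I ∧ T 0 ⊆ S) → (∀ α, 0 < α → α < ζ → T α ∉ I ∧ T α ⊆ σ α T) →
      ∃ α < ζ, InterBelow T α ∈ I)

/-- Empty has a winning strategy in `BM'_{<ζ}(I,S)`. -/
def EmptyWinsBMPrime (ζ : Ordinal) (I : Set (Set Ordinal)) (S : Set Ordinal) : Prop :=
  ∃ σ, EmptyBMPrimeStratWins ζ I S σ

/-- Nonempty has a winning strategy in `BM'_{<ζ}(I,S)`: a first move `T0` (an
`I`-positive subset of `S`, provided the game has any stage at all) together with
responses `τ α Sq` to empty's moves `Sq β` (`0 < β ≤ α`) at all later stages `α`. -/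
def NonemptyWinsBMPrime (ζ : Ordinal) (I : Set (Set Ordinal)) (S : Set Ordinal) : Prop :=
  ∃ T0 : Set Ordinal, ∃ τ : Ordinal → (Ordinal → Set Ordinal) → Set Ordinal,
    (0 < ζ → T0 ∉ I ∧ T0 ⊆ S) ∧
    (∀ (α : Ordinal) (Sq Sq' : Ordinal → Set Ordinal),
        (∀ β ≤ α, Sq β = Sq' β) → τ α Sq = τ α Sq') ∧
    ∀ Sq : Ordinal → Set Ordinal, ∀ α, 0 < α → α < ζ →
      ((∀ β, 0 < β → β ≤ α →
          Sq β ∉ I ∧ Sq β ⊆ T0 ∧ ∀ γ, 0 < γ → γ < β → Sq β ⊆ Sq γ ∩ τ γ Sq) →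
        τ α Sq ∉ I ∧ τ α Sq ⊆ Sq α) ∧
      ((∀ β, 0 < β → β < α →
          Sq β ∉ I ∧ Sq β ⊆ T0 ∧ ∀ γ, 0 < γ → γ < β → Sq β ⊆ Sq γ ∩ τ γ Sq) →
        (T0 ∩ ⋂ β ∈ Set.Ioo (0 : Ordinal) α, (Sq β ∩ τ β Sq)) ∉ I)

/-! ### The pressing down game `PD_{<ζ}(I,S)`.

At each stage `α < ζ` empty plays a regressive function `f_α : κ → κ` and nonempty plays
a set `T_α ⊆ S` contained in all previous `T_β` on which `f_α` is constant.  Empty wins a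
run iff `T_α ∈ I` for some `α < ζ`. -/

/-- Empty has a winning strategy in `PD_{<ζ}(I,S)`: a (history-dependent) choice of
regressive functions such that in every run in which nonempty plays legally, some move
of nonempty lies in `I`. -/
def EmptyWinsPD (ζ : Ordinal) (I : Set (Set Ordinal)) (S : Set Ordinal) : Prop :=
  ∃ σ : Ordinal → (Ordinal → Set Ordinal) → (Ordinal → Ordinal),
    (∀ (α : Ordinal) (T T' : Ordinal → Set Ordinal),
        (∀ β < α, T β = T' β) → σ α T = σ α T') ∧
    (∀ (α : Ordinal) (T : Ordinal → Set Ordinal) (β : Ordinal), 0 < β → σ α T β < β) ∧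
    ∀ T : Ordinal → Set Ordinal,
      (∀ α, α < ζ →
        T α ⊆ S ∧ (∀ β < α, T α ⊆ T β) ∧ ∃ c, ∀ x ∈ T α, σ α T x = c) →
      ∃ α, α < ζ ∧ T α ∈ I

/-- Nonempty has a winning strategy in `PD_{<ζ}(I,S)`: responses `τ α g` to the
sequence `g` of regressive functions played by empty, which are always legal
(homogeneous subsets of `S` and of all previous responses) and never lie in `I`. -/
def NonemptyWinsPD (ζ : Ordinal) (I : Set (Set Ordinal)) (S : Set Ordinal) : Prop :=
  ∃ τ : Ordinal → (Ordinal → (Ordinal → Ordinal)) → Set Ordinal,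
    (∀ (α : Ordinal) (g g' : Ordinal → (Ordinal → Ordinal)),
        (∀ β ≤ α, g β = g' β) → τ α g = τ α g') ∧
    ∀ g : Ordinal → (Ordinal → Ordinal), (∀ α β, 0 < β → g α β < β) →
      ∀ α, α < ζ →
        τ α g ⊆ S ∧ (∀ β < α, τ α g ⊆ τ β g) ∧ (∃ c, ∀ x ∈ τ α g, g α x = c) ∧
        τ α g ∉ I

/-! ### The games of length `ω + 1` on `κ`: `BM_{≤ω}(I,S)` and the ideal game.

In `BM_{≤ω}(I,S)` the players move at the finite stages `n < ω` and empty wins a run iff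
`⋂_{n<ω} S_n ∈ I`; in the ideal game (played on `κ` itself) empty wins iff
`⋂_{n<ω} S_n = ∅`. -/

/-- `σ` is a winning strategy for empty in `BM_{≤ω}(I,S)`. -/
def EmptyBMOmegaStratWins (I : Set (Set Ordinal)) (S : Set Ordinal)
    (σ : ℕ → (ℕ → Set Ordinal) → Set Ordinal) : Prop :=
  (∀ (n : ℕ) (T T' : ℕ → Set Ordinal), (∀ m < n, T m = T' m) → σ n T = σ n T') ∧
  ∀ T : ℕ → Set Ordinal,
    (∀ n, (∀ m < n, T m ∉ I ∧ T m ⊆ σ m T) →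
      σ n T ∉ I ∧ σ n T ⊆ S ∧ ∀ m < n, σ n T ⊆ T m) ∧
    ((∀ n, T n ∉ I ∧ T n ⊆ σ n T) → (⋂ n, σ n T) ∈ I)

/-- Empty has a winning strategy in `BM_{≤ω}(I,S)`. -/
def EmptyWinsBMOmega (I : Set (Set Ordinal)) (S : Set Ordinal) : Prop :=
  ∃ σ, EmptyBMOmegaStratWins I S σ

/-- Nonempty has a winning strategy in `BM_{≤ω}(I,S)`. -/
def NonemptyWinsBMOmega (I : Set (Set Ordinal)) (S : Set Ordinal) : Prop :=
  ∃ τ : ℕ → (ℕ → Set Ordinal) → Set Ordinal,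
    (∀ (n : ℕ) (Sq Sq' : ℕ → Set Ordinal), (∀ m ≤ n, Sq m = Sq' m) → τ n Sq = τ n Sq') ∧
    ∀ Sq : ℕ → Set Ordinal,
      (∀ n, (∀ m ≤ n, Sq m ∉ I ∧ Sq m ⊆ S ∧ ∀ k < m, Sq m ⊆ Sq k ∩ τ k Sq) →
        τ n Sq ∉ I ∧ τ n Sq ⊆ Sq n) ∧
      ((∀ n, Sq n ∉ I ∧ Sq n ⊆ S ∧ ∀ k < n, Sq n ⊆ Sq k ∩ τ k Sq) →
        (⋂ n, Sq n) ∉ I)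

/-- Empty has a winning strategy in the ideal game on `I` (played on `κ`). -/
def EmptyWinsIdealGame (κ : Ordinal) (I : Set (Set Ordinal)) : Prop :=
  ∃ σ : ℕ → (ℕ → Set Ordinal) → Set Ordinal,
    (∀ (n : ℕ) (T T' : ℕ → Set Ordinal), (∀ m < n, T m = T' m) → σ n T = σ n T') ∧
    ∀ T : ℕ → Set Ordinal,
      (∀ n, (∀ m < n, T m ∉ I ∧ T m ⊆ σ m T) →
        σ n T ∉ I ∧ σ n T ⊆ Set.Iio κ ∧ ∀ m < n, σ n T ⊆ T m) ∧
      ((∀ n, T n ∉ I ∧ T n ⊆ σ n T) → (⋂ n, σ n T) = ∅)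

/-- Nonempty has a winning strategy in the ideal game on `I` (played on `κ`). -/
def NonemptyWinsIdealGame (κ : Ordinal) (I : Set (Set Ordinal)) : Prop :=
  ∃ τ : ℕ → (ℕ → Set Ordinal) → Set Ordinal,
    (∀ (n : ℕ) (Sq Sq' : ℕ → Set Ordinal), (∀ m ≤ n, Sq m = Sq' m) → τ n Sq = τ n Sq') ∧
    ∀ Sq : ℕ → Set Ordinal,
      (∀ n, (∀ m ≤ n, Sq m ∉ I ∧ Sq m ⊆ Set.Iio κ ∧ ∀ k < m, Sq m ⊆ Sq k ∩ τ k Sq) →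
        τ n Sq ∉ I ∧ τ n Sq ⊆ Sq n) ∧
      ((∀ n, Sq n ∉ I ∧ Sq n ⊆ Set.Iio κ ∧ ∀ k < n, Sq n ⊆ Sq k ∩ τ k Sq) →
        (⋂ n, Sq n).Nonempty)

/-!
If nonempty wins `BM_{<ζ}(I,S)` with a strategy `τ`, nonempty can win `PD_{<ζ}(I,S)` by
playing a simulated run of `BM` on the side.  When empty presses down with `g α`, by
normality `g α` is constant on an `I`-positive subset `Sq α` of the current position of the
simulated run; this is the simulated move of empty, and the answer of `τ` to it is nonempty's
move in `PD`.  It is contained in `Sq α`, hence homogeneous for `g α`, and it is `I`-positive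
because `τ` wins.
-/

section TransfiniteRecursion

variable {ι β : Type*} [LinearOrder ι] [WellFoundedLT ι] [Inhabited β]

/-- Solves `s α = F α s` when `F` is local (`transfiniteRec_eq`): `F α` is fed `s` below `α`,
padded with `default`. -/
def transfiniteRec (F : ι → (ι → β) → β) : ι → β :=
  WellFoundedLT.fix fun α rec => F α fun γ => if h : γ < α then rec γ h else default

def IsLocal (F : ι → (ι → β) → β) : Prop :=
  ∀ α (s s' : ι → β), (∀ γ < α, s γ = s' γ) → F α s = F α s'

theorem transfiniteRec_eq {F : ι → (ι → β) → β} (hF : IsLocal F) (α : ι) :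
    transfiniteRec F α = F α (transfiniteRec F) := by
  rw [transfiniteRec, WellFoundedLT.fix_eq]
  exact hF α _ _ fun γ hγ => dif_pos hγ

theorem transfiniteRec_congr {F F' : ι → (ι → β) → β} (hF : IsLocal F) (hF' : IsLocal F')
    {α₀ : ι} (h : ∀ α ≤ α₀, F α = F' α) : ∀ α ≤ α₀, transfiniteRec F α = transfiniteRec F' α := by
  intro α
  induction α using WellFoundedLT.induction with
  | ind α ih =>
    intro hα
    rw [transfiniteRec_eq hF, transfiniteRec_eq hF', h α hα]
    exact hF' α _ _ fun γ hγ => ih γ hγ (hγ.le.trans hα)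

end TransfiniteRecursion

section PressingDown

variable {κ : Ordinal} {I : Set (Set Ordinal)}

theorem IsNormalIdeal.pressing_down (hI : IsIdealOn κ I) (hN : IsNormalIdeal κ I)
    {A : Set Ordinal} (hA : A ∉ I) {f : Ordinal → Ordinal} (hf : ∀ β, 0 < β → f β < β) :
    ∃ B ⊆ A, B ∉ I ∧ ∃ c, ∀ x ∈ B, f x = c := by
  obtain ⟨hIκ, -, hsub, hunion, -⟩ := hI
  by_contra! hnone
  have hfiber : ∀ γ, A ∩ f ⁻¹' {γ} ∈ I := fun γ => by
    by_contra hpos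
    obtain ⟨x, hx, hne⟩ := hnone _ inter_subset_left hpos γ
    exact hne hx.2
  refine hA (hsub _ _ ?_ (hunion _ (hN _ fun γ _ => hfiber γ) _ (hfiber (f 0))))
  intro x hx
  rcases eq_or_ne x 0 with rfl | hx0
  · exact Or.inr ⟨hx, rfl⟩
  · exact Or.inl ⟨hIκ _ (hfiber (f x)) ⟨hx, rfl⟩, f x, hf x (pos_iff_ne_zero.2 hx0), hx, rfl⟩

end PressingDown

section Simulation

variable {ζ : Ordinal} {I : Set (Set Ordinal)} {S : Set Ordinal}
  {τ : Ordinal → (Ordinal → Set Ordinal) → Set Ordinal} {g : Ordinal → Ordinal → Ordinal}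

/-- The position of `BM_{<ζ}(I,S)` at stage `α`, after empty's moves `Sq β` and nonempty's
answers `τ β Sq` for `β < α`. -/
def bmPosition (S : Set Ordinal) (τ : Ordinal → (Ordinal → Set Ordinal) → Set Ordinal)
    (Sq : Ordinal → Set Ordinal) (α : Ordinal) : Set Ordinal :=
  S ∩ InterBelow (fun β => Sq β ∩ τ β Sq) α

theorem bmPosition_congr
    (hτ : ∀ α (Sq Sq' : Ordinal → Set Ordinal), (∀ β ≤ α, Sq β = Sq' β) → τ α Sq = τ α Sq')
    {Sq Sq' : Ordinal → Set Ordinal} {α : Ordinal} (hSq : ∀ β < α, Sq β = Sq' β) :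
    bmPosition S τ Sq α = bmPosition S τ Sq' α :=
  congrArg (S ∩ ·) <| iInter₂_congr fun β (hβ : β < α) => by
    dsimp only
    rw [hSq β hβ, hτ β Sq Sq' fun γ hγ => hSq γ (hγ.trans_lt hβ)]

open Classical in
/-- An `I`-positive subset of `X` on which `f` is constant (`∅` if there is none). -/
def homogeneousSubset (I : Set (Set Ordinal)) (f : Ordinal → Ordinal) (X : Set Ordinal) :
    Set Ordinal :=
  if h : ∃ B ⊆ X, B ∉ I ∧ ∃ c, ∀ x ∈ B, f x = c then h.choose else ∅

theorem homogeneousSubset_spec {κ : Ordinal} (hI : IsIdealOn κ I) (hN : IsNormalIdeal κ I)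
    {f : Ordinal → Ordinal} (hf : ∀ β, 0 < β → f β < β) {X : Set Ordinal} (hX : X ∉ I) :
    homogeneousSubset I f X ⊆ X ∧ homogeneousSubset I f X ∉ I ∧
      ∃ c, ∀ x ∈ homogeneousSubset I f X, f x = c := by
  have hex := hN.pressing_down hI hX hf
  rw [homogeneousSubset, dif_pos hex]
  exact hex.choose_spec

/-- Empty's moves in the run of `BM` simulated against the regressive functions `g`. -/
def simulatedRun (I : Set (Set Ordinal)) (S : Set Ordinal)
    (τ : Ordinal → (Ordinal → Set Ordinal) → Set Ordinal) (g : Ordinal → Ordinal → Ordinal) :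
    Ordinal → Set Ordinal :=
  transfiniteRec fun α Sq => homogeneousSubset I (g α) (bmPosition S τ Sq α)

theorem isLocal_homogeneousSubset_bmPosition
    (hτ : ∀ α (Sq Sq' : Ordinal → Set Ordinal), (∀ β ≤ α, Sq β = Sq' β) → τ α Sq = τ α Sq') :
    IsLocal fun α Sq => homogeneousSubset I (g α) (bmPosition S τ Sq α) :=
  fun _ _ _ hSq => congrArg _ (bmPosition_congr hτ hSq)

theorem simulatedRun_congr
    (hτ : ∀ α (Sq Sq' : Ordinal → Set Ordinal), (∀ β ≤ α, Sq β = Sq' β) → τ α Sq = τ α Sq')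
    {g' : Ordinal → Ordinal → Ordinal} {α : Ordinal} (hgg' : ∀ β ≤ α, g β = g' β) :
    ∀ β ≤ α, simulatedRun I S τ g β = simulatedRun I S τ g' β :=
  transfiniteRec_congr (isLocal_homogeneousSubset_bmPosition hτ)
    (isLocal_homogeneousSubset_bmPosition hτ) fun β hβ => by simp only [hgg' β hβ]


/-- Empty's move at stage `β` is legal in `BM_{<ζ}(I,S)` against `τ`. -/
def IsLegalMove (I : Set (Set Ordinal)) (S : Set Ordinal)
    (τ : Ordinal → (Ordinal → Set Ordinal) → Set Ordinal) (Sq : Ordinal → Set Ordinal)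
    (β : Ordinal) : Prop :=
  Sq β ∉ I ∧ Sq β ⊆ S ∧ ∀ γ < β, Sq β ⊆ Sq γ ∩ τ γ Sq

theorem bmPosition_notMem (hS : S ∉ I) {Sq : Ordinal → Set Ordinal} {α : Ordinal}
    (hlegal : ∀ β < α, IsLegalMove I S τ Sq β)
    (hwin : InterBelow (fun β => Sq β ∩ τ β Sq) α ∉ I) : bmPosition S τ Sq α ∉ I := by
  rcases eq_or_ne α 0 with rfl | hα
  · simpa [bmPosition, InterBelow] using hS
  · have hα : 0 < α := pos_iff_ne_zero.2 hα
    have hsub : InterBelow (fun β => Sq β ∩ τ β Sq) α ⊆ S := fun x hx =>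
      (hlegal 0 hα).2.1 (mem_iInter₂.1 hx 0 hα).1
    rwa [bmPosition, inter_eq_right.2 hsub]

theorem simulatedRun_spec {κ : Ordinal} (hI : IsIdealOn κ I) (hN : IsNormalIdeal κ I)
    (hS : S ∉ I)
    (hτ : ∀ α (Sq Sq' : Ordinal → Set Ordinal), (∀ β ≤ α, Sq β = Sq' β) → τ α Sq = τ α Sq')
    (hτwin : ∀ Sq : Ordinal → Set Ordinal, ∀ α < ζ,
      (∀ β < α, IsLegalMove I S τ Sq β) →
        InterBelow (fun β => Sq β ∩ τ β Sq) α ∉ I)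
    (hg : ∀ α β, 0 < β → g α β < β) {α : Ordinal} (hα : α < ζ) :
    (∀ β ≤ α, IsLegalMove I S τ (simulatedRun I S τ g) β) ∧
      ∃ c, ∀ x ∈ simulatedRun I S τ g α, g α x = c := by
  set Sq := simulatedRun I S τ g
  induction α using WellFoundedLT.induction with
  | ind α ih =>
    have hbelow : ∀ β < α, IsLegalMove I S τ Sq β :=
      fun β hβ => (ih β hβ (hβ.trans hα)).1 β le_rfl
    obtain ⟨hsub, hnotMem, hconst⟩ := homogeneousSubset_spec hI hN (hg α)
      (bmPosition_notMem hS hbelow (hτwin Sq α hα hbelow))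
    have hSq : Sq α = homogeneousSubset I (g α) (bmPosition S τ Sq α) :=
      transfiniteRec_eq (isLocal_homogeneousSubset_bmPosition hτ) α
    rw [← hSq] at hsub hnotMem hconst
    refine ⟨fun β hβ => ?_, hconst⟩
    rcases hβ.lt_or_eq with hβ | rfl
    · exact hbelow β hβ
    · exact ⟨hnotMem, fun x hx => (hsub hx).1,
        fun γ hγ x hx => mem_iInter₂.1 (hsub hx).2 γ hγ⟩

end Simulation

theorem statement12_general (κ ζ : Ordinal) (I : Set (Set Ordinal)) (S : Set Ordinal)
    (hI : FineNormalIdeal κ I)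
    (hSpos : S ∉ I)
    (h : NonemptyWinsBM ζ I S) :
    NonemptyWinsPD ζ I S := by
  obtain ⟨τ, hτ, hτwin⟩ := h
  obtain ⟨hIdeal, -, hN⟩ := hI
  refine ⟨fun α g => τ α (simulatedRun I S τ g), fun α g g' hgg' =>
    hτ α _ _ (simulatedRun_congr hτ hgg'), fun g hg α hα => ?_⟩
  obtain ⟨hlegal, c, hc⟩ :=
    simulatedRun_spec hIdeal hN hSpos hτ (fun Sq α hα => (hτwin Sq α hα).2) hg hα
  obtain ⟨hnotMem, hsub⟩ := (hτwin _ α hα).1 hlegal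
  exact ⟨hsub.trans (hlegal α le_rfl).2.1,
    fun β hβ _ hx => ((hlegal α le_rfl).2.2 β hβ (hsub hx)).2,
    ⟨c, fun x hx => hc x (hsub hx)⟩, hnotMem⟩

/-- If nonempty wins `BM_{<ζ}(I,S)`, then nonempty wins `PD_{<ζ}(I,S)`. -/
theorem statement12 (κ ζ : Ordinal) (I : Set (Set Ordinal)) (S : Set Ordinal)
    (hκ : RegUncountable κ) (hI : FineNormalIdeal κ I)
    (hSκ : S ⊆ Set.Iio κ) (hSpos : S ∉ I)
    (h : NonemptyWinsBM ζ I S) :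
    NonemptyWinsPD ζ I S :=
  statement12_general κ ζ I S hI hSpos h

end BMPDGames
end
end

section
/- Let I be a fine normal ideal on κ such that E^κ_ω ∉ I. Then empty has a winning strategy in the pressing down game PD_{≤ω}(I, E^κ_ω); in fact there is a fixed sequence of regressive functions (f_α)_{α≤ω}, chosen in advance and independent of nonempty's play, such that empty wins every run of PD_{≤ω}(I, E^κ_ω) in which empty plays f_α at stage α. -/
open Set

noncomputable section

namespace BMPDGames

/-- Every ordinal of cofinality `ω` is the least strict upper bound of a sequence. -/
lemma exists_nat_lsub (β : Ordinal) (h : β.cof = Cardinal.aleph0) :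
    ∃ g : ℕ → Ordinal, Ordinal.lsub g = β := by
  obtain ⟨ι, f, hf, hι⟩ := Ordinal.exists_lsub_cof β
  rw [h] at hι
  obtain ⟨d⟩ := Cardinal.denumerable_iff.2 hι
  refine ⟨f ∘ (Denumerable.eqv ι).symm, le_antisymm ?_ ?_⟩
  · exact Ordinal.lsub_le fun n => hf ▸ Ordinal.lt_lsub f _
  · rw [← hf]
    exact Ordinal.lsub_le fun i => by
      simpa using Ordinal.lt_lsub (f ∘ (Denumerable.eqv ι).symm) (Denumerable.eqv ι i)

/-- A fixed cofinal sequence in each ordinal of cofinality `ω`. -/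
noncomputable def pdSeq (β : Ordinal) : ℕ → Ordinal :=
  if h : β.cof = Cardinal.aleph0 then (exists_nat_lsub β h).choose else fun _ => 0

lemma pdSeq_lsub {β : Ordinal} (h : β.cof = Cardinal.aleph0) :
    Ordinal.lsub (pdSeq β) = β := by
  rw [pdSeq, dif_pos h]; exact (exists_nat_lsub β h).choose_spec

lemma pdSeq_lt {β : Ordinal} (h : β.cof = Cardinal.aleph0) (n : ℕ) :
    pdSeq β n < β := by
  conv_rhs => rw [← pdSeq_lsub h]
  exact Ordinal.lt_lsub (pdSeq β) n

/-- Decode a natural number from an ordinal. -/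
noncomputable def natOf (α : Ordinal) : ℕ :=
  open scoped Classical in
  if h : ∃ n : ℕ, α = (n : Ordinal) then h.choose else 0

lemma natOf_cast (n : ℕ) : natOf (n : Ordinal) = n := by
  have h : ∃ m : ℕ, (n : Ordinal) = (m : Ordinal) := ⟨n, rfl⟩
  have h2 := h.choose_spec
  rw [natOf]
  rw [dif_pos h]
  exact_mod_cast h2.symm

/-- The fixed regressive functions for empty's strategy. -/
noncomputable def pdF (α β : Ordinal) : Ordinal :=
  if h : β.cof = Cardinal.aleph0 then pdSeq β (natOf α) else 0

lemma pdF_regressive (α β : Ordinal) (hβ : 0 < β) : pdF α β < β := by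
  rw [pdF]
  split
  · exact pdSeq_lt ‹_› _
  · exact hβ

lemma pdF_wins (κ : Ordinal) (I : Set (Set Ordinal))
    (hκ : RegUncountable κ) (hId : IsIdealOn κ I) :
    ∀ T : Ordinal → Set Ordinal,
      (∀ α, α < Ordinal.omega0 + 1 →
        T α ⊆ Ecofomega κ ∧ (∀ β < α, T α ⊆ T β) ∧ ∃ c, ∀ x ∈ T α, pdF α x = c) →
      ∃ α, α < Ordinal.omega0 + 1 ∧ T α ∈ I := by
  intro T hT
  have hω : Ordinal.omega0 < Ordinal.omega0 + 1 := lt_add_one _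
  refine ⟨Ordinal.omega0, hω, ?_⟩
  have hκ0 : (0 : Ordinal) < κ := by
    rcases hκ with ⟨_, h1, _⟩
    rw [pos_iff_ne_zero]
    rintro rfl
    simp at h1
  -- T ω is a subsingleton
  have hsub : ∀ x ∈ T Ordinal.omega0, ∀ y ∈ T Ordinal.omega0, x = y := by
    intro x hx y hy
    have key : ∀ z ∈ T Ordinal.omega0, ∀ n : ℕ,
        pdSeq z n = Classical.choose (hT (n : Ordinal)
          ((Ordinal.nat_lt_omega0 n).trans hω)).2.2 := by
      intro z hz n
      have hn : (n : Ordinal) < Ordinal.omega0 + 1 := (Ordinal.nat_lt_omega0 n).trans hω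
      have hzn : z ∈ T (n : Ordinal) :=
        (hT Ordinal.omega0 hω).2.1 (n : Ordinal) (Ordinal.nat_lt_omega0 n) hz
      have hcof : z.cof = Cardinal.aleph0 := ((hT Ordinal.omega0 hω).1 hz).2
      have := Classical.choose_spec (hT (n : Ordinal) hn).2.2 z hzn
      rw [pdF, dif_pos hcof, natOf_cast] at this
      exact this
    have hcx : x.cof = Cardinal.aleph0 := ((hT Ordinal.omega0 hω).1 hx).2
    have hcy : y.cof = Cardinal.aleph0 := ((hT Ordinal.omega0 hω).1 hy).2
    have hxy : pdSeq x = pdSeq y := funext fun n => (key x hx n).trans (key y hy n).symm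
    rw [← pdSeq_lsub hcx, ← pdSeq_lsub hcy, hxy]
  obtain ⟨_, hsing, hmono, -, -⟩ := hId
  rcases Set.eq_empty_or_nonempty (T Ordinal.omega0) with he | ⟨x, hx⟩
  · exact hmono _ _ (he ▸ Set.empty_subset _) (hsing 0 hκ0)
  · refine hmono _ {x} (fun y hy => hsub y hy x hx) (hsing x ?_)
    exact ((hT Ordinal.omega0 hω).1 hx).1

/-- If `E^κ_ω ∉ I`, then empty wins `PD_{≤ω}(I, E^κ_ω)`; in fact there is a
fixed sequence of regressive functions `(f_α)_{α ≤ ω}`, chosen in advance and independent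
of nonempty's play, such that empty wins every run of `PD_{≤ω}(I, E^κ_ω)` in which empty
plays `f_α` at stage `α`. -/
theorem statement13 (κ : Ordinal) (I : Set (Set Ordinal))
    (hκ : RegUncountable κ) (hI : FineNormalIdeal κ I)
    (hE : Ecofomega κ ∉ I) :
    EmptyWinsPD (Ordinal.omega0 + 1) I (Ecofomega κ) ∧
    ∃ f : Ordinal → (Ordinal → Ordinal),
      (∀ (α β : Ordinal), 0 < β → f α β < β) ∧
      ∀ T : Ordinal → Set Ordinal,
        (∀ α, α < Ordinal.omega0 + 1 →
          T α ⊆ Ecofomega κ ∧ (∀ β < α, T α ⊆ T β) ∧ ∃ c, ∀ x ∈ T α, f α x = c) →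
        ∃ α, α < Ordinal.omega0 + 1 ∧ T α ∈ I := by
  constructor
  · exact ⟨fun α _ => pdF α, fun _ _ _ _ => rfl,
      fun α _ β hβ => pdF_regressive α β hβ, pdF_wins κ I hκ hI.1⟩
  · exact ⟨pdF, fun α β hβ => pdF_regressive α β hβ, pdF_wins κ I hκ hI.1⟩

end BMPDGames
end
end

section
/- Let S ⊆ ω₁ be stationary. Then empty has a winning strategy in the pressing down game PD_{≤ω}(NS,S) and empty has a winning strategy in the Banach–Mazur game BM_{≤ω}(NS,S), where NS is the nonstationary ideal on ω₁. -/
open Set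

noncomputable section

namespace BMPDGames

/-- `ω₁`, the first uncountable cardinal, as an ordinal. -/
def omega1 : Ordinal := (Cardinal.aleph 1).ord

/-!
Fix, for every `0 < β < ω₁`, a surjection `e_β : ℕ → β`. At stage `n` empty presses down with
the regressive function `β ↦ e_β(n)`. A set on which all of these functions are constant consists
of ordinals with the same enumeration, hence has at most one nonzero element, and so is
nonstationary. In the pressing down game such a set is nonempty's move at stage `ω`. In the
Banach–Mazur game empty uses Fodor's lemma to shrink nonempty's last move to a stationary set on
which `β ↦ e_β(n)` is constant, so the intersection of all moves is such a set.
-/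

lemma omega1_isSuccLimit : Order.IsSuccLimit omega1 :=
  Cardinal.isSuccLimit_ord (Cardinal.aleph0_le_aleph 1)

lemma countable_Iio_of_lt_omega1 {β : Ordinal} (hβ : β < omega1) : (Iio β).Countable := by
  rw [← Cardinal.le_aleph0_iff_set_countable, Cardinal.mk_Iio_ordinal, Cardinal.lift_le_aleph0]
  exact Cardinal.lt_aleph_one_iff.mp (Cardinal.lt_ord.mp hβ)

lemma iSup_lt_omega1 {x : ℕ → Ordinal} (hx : ∀ k, x k < omega1) : ⨆ k, x k < omega1 := by
  simp only [omega1, Cardinal.ord_aleph] at hx ⊢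
  exact Ordinal.iSup_lt_omega_one hx

lemma bddAbove_range_of_lt_omega1 {x : ℕ → Ordinal} (hx : ∀ k, x k < omega1) :
    BddAbove (range x) :=
  ⟨omega1, forall_mem_range.2 fun k => (hx k).le⟩

/-- The fallback value `0` keeps `enumBelow β n < β` for every positive `β`. -/
def enumBelow (β : Ordinal) : ℕ → Ordinal :=
  if h : 0 < β ∧ β < omega1 then
    ((countable_Iio_of_lt_omega1 h.2).exists_eq_range ⟨0, h.1⟩).choose
  else fun _ => 0

lemma range_enumBelow {β : Ordinal} (h0 : 0 < β) (h1 : β < omega1) :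
    range (enumBelow β) = Iio β := by
  rw [enumBelow, dif_pos ⟨h0, h1⟩]
  exact ((countable_Iio_of_lt_omega1 h1).exists_eq_range ⟨0, h0⟩).choose_spec.symm

lemma enumBelow_lt {β : Ordinal} (h0 : 0 < β) (n : ℕ) : enumBelow β n < β := by
  by_cases h1 : β < omega1
  · exact (range_enumBelow h0 h1).subset (mem_range_self n)
  · rwa [enumBelow, dif_neg fun h => h1 h.2]

lemma eq_of_enumBelow_eq {β β' : Ordinal} (h0 : 0 < β) (h1 : β < omega1) (h0' : 0 < β')
    (h1' : β' < omega1) (h : enumBelow β = enumBelow β') : β = β' := by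
  rw [← Iio_inj, ← range_enumBelow h0 h1, ← range_enumBelow h0' h1', h]

lemma notMem_NSIdeal_iff {κ : Ordinal} {A : Set Ordinal} (hA : A ⊆ Iio κ) :
    A ∉ NSIdeal κ ↔ IsStationaryIn κ A := by
  simp [NSIdeal, IsStationaryIn, hA, ← not_nonempty_iff_eq_empty]

lemma isClubIn_Ioo {γ : Ordinal} (hγ : γ < omega1) : IsClubIn omega1 (Ioo γ omega1) := by
  refine ⟨Ioo_subset_Iio_self, fun D hD ⟨x, hx⟩ hlt => ?_, fun β hβ => ?_⟩
  · have hbdd : BddAbove D := ⟨omega1, fun y hy => (hD hy).2.le⟩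
    exact ⟨(hD hx).1.trans_le (le_csSup hbdd hx), hlt⟩
  · refine ⟨Order.succ (max β γ), ⟨?_, omega1_isSuccLimit.succ_lt (max_lt hβ hγ)⟩, ?_⟩
    · exact (le_max_right β γ).trans_lt (Order.lt_succ _)
    · exact (le_max_left β γ).trans_lt (Order.lt_succ _)

lemma mem_NSIdeal_of_subset_Iic {A : Set Ordinal} {γ : Ordinal} (hA : A ⊆ Iio omega1)
    (hγ : γ < omega1) (h : A ⊆ Iic γ) : A ∈ NSIdeal omega1 :=
  ⟨hA, Ioo γ omega1, isClubIn_Ioo hγ,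
    eq_empty_of_forall_notMem fun _ hx => (h hx.1).not_gt hx.2.1⟩

lemma mem_NSIdeal_of_forall_exists_enumBelow_eq {A : Set Ordinal} (hA : A ⊆ Iio omega1)
    (h : ∀ n, ∃ c, ∀ β ∈ A, enumBelow β n = c) : A ∈ NSIdeal omega1 := by
  choose c hc using h
  have hA_enum : ∀ β ∈ A, enumBelow β = c := fun β hβ => funext fun n => hc n β hβ
  by_cases hpos : ∃ β ∈ A, 0 < β
  · obtain ⟨β₀, hβ₀, hβ₀_pos⟩ := hpos
    refine mem_NSIdeal_of_subset_Iic hA (hA hβ₀) fun β hβ => ?_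
    rcases eq_zero_or_pos β with rfl | hβ_pos
    · exact zero_le (a := β₀)
    · exact (eq_of_enumBelow_eq hβ_pos (hA hβ) hβ₀_pos (hA hβ₀)
        ((hA_enum β hβ).trans (hA_enum β₀ hβ₀).symm)).le
  · simp only [not_exists, not_and, not_lt] at hpos
    exact mem_NSIdeal_of_subset_Iic hA omega1_isSuccLimit.bot_lt hpos

lemma IsClubIn.sSup_mem_of_cofinal {κ : Ordinal} {C D : Set Ordinal} (hC : IsClubIn κ C)
    (hD : D.Nonempty) (hlt : sSup D < κ) (hcof : ∀ x ∈ D, ∃ y ∈ D ∩ C, x ≤ y) :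
    sSup D ∈ C := by
  have hsup : sSup (D ∩ C) = sSup D :=
    csSup_eq_csSup_of_forall_exists_le (fun y hy => ⟨y, hy.1, le_rfl⟩) hcof
  obtain ⟨x, hx⟩ := hD
  obtain ⟨y, hy, -⟩ := hcof x hx
  rw [← hsup] at hlt ⊢
  exact hC.2.1 _ inter_subset_right ⟨y, hy⟩ hlt

lemma IsClubIn.iSup_mem {C : Set Ordinal} (hC : IsClubIn omega1 C) {x : ℕ → Ordinal}
    (hx : Monotone x) (hlt : ∀ k, x k < omega1) (hfreq : ∀ k, ∃ m ≥ k, x m ∈ C) :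
    ⨆ k, x k ∈ C := by
  refine hC.sSup_mem_of_cofinal (range_nonempty x) (iSup_lt_omega1 hlt) ?_
  rintro _ ⟨k, rfl⟩
  obtain ⟨m, hkm, hm⟩ := hfreq k
  exact ⟨x m, ⟨mem_range_self m, hm⟩, hx hkm⟩

lemma exists_seq_of_forall_exists_gt {κ : Ordinal} {R : ℕ → Ordinal → Ordinal → Prop}
    (h : ∀ n, ∀ β < κ, ∃ γ < κ, β < γ ∧ R n β γ) {β₀ : Ordinal} (hβ₀ : β₀ < κ) :
    ∃ x : ℕ → Ordinal, x 0 = β₀ ∧ ∀ k, x k < κ ∧ x k < x (k + 1) ∧ R k (x k) (x (k + 1)) := by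
  choose! g hg using h
  let x : ℕ → Ordinal := fun k => Nat.rec β₀ g k
  have hxκ : ∀ k, x k < κ := by
    intro k
    induction k with
    | zero => exact hβ₀
    | succ k ih => exact (hg k _ ih).1
  exact ⟨x, rfl, fun k => ⟨hxκ k, (hg k _ (hxκ k)).2⟩⟩

lemma isClubIn_iInter {C : ℕ → Set Ordinal} (hC : ∀ n, IsClubIn omega1 (C n)) :
    IsClubIn omega1 (⋂ n, C n) := by
  refine ⟨(iInter_subset _ 0).trans (hC 0).1, fun D hD hne hlt => ?_, fun β hβ => ?_⟩
  · exact mem_iInter.2 fun n => (hC n).2.1 D (hD.trans (iInter_subset _ n)) hne hlt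
  -- `Nat.unpair` interleaves the requirements of all the clubs along one sequence
  have hstep : ∀ k : ℕ, ∀ β < omega1, ∃ γ < omega1, β < γ ∧ γ ∈ C k.unpair.1 := by
    intro k β hβ
    obtain ⟨γ, hγC, hβγ⟩ := (hC k.unpair.1).2.2 β hβ
    exact ⟨γ, (hC _).1 hγC, hβγ, hγC⟩
  obtain ⟨x, rfl, hx⟩ := exists_seq_of_forall_exists_gt hstep hβ
  have hmono : Monotone x := (strictMono_nat_of_lt_succ fun k => (hx k).2.1).monotone
  refine ⟨⨆ k, x k, mem_iInter.2 fun n => (hC n).iSup_mem hmono (fun k => (hx k).1) ?_, ?_⟩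
  · refine fun k => ⟨Nat.pair n k + 1, (Nat.right_le_pair n k).trans (Nat.le_succ _), ?_⟩
    simpa using (hx (Nat.pair n k)).2.2
  · exact (hx 0).2.1.trans_le (le_ciSup (bddAbove_range_of_lt_omega1 fun k => (hx k).1) 1)

lemma exists_gt_forall_mem_of_isClubIn {C : Ordinal → Set Ordinal}
    (hC : ∀ γ < omega1, IsClubIn omega1 (C γ)) {β : Ordinal} (hβ : β < omega1) :
    ∃ γ < omega1, β < γ ∧ ∀ ξ < β, γ ∈ C ξ := by
  -- enumerating `Iio (β + 1)` rather than `Iio β` avoids the empty case `β = 0`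
  have hβ1 : β + 1 < omega1 := omega1_isSuccLimit.add_one_lt hβ
  have hβ1_pos : 0 < β + 1 := zero_le.trans_lt (lt_add_one β)
  have hclub := isClubIn_iInter fun n =>
    hC (enumBelow (β + 1) n) ((enumBelow_lt hβ1_pos n).trans hβ1)
  obtain ⟨γ, hγC, hβγ⟩ := hclub.2.2 β hβ
  refine ⟨γ, hclub.1 hγC, hβγ, fun ξ hξ => ?_⟩
  obtain ⟨n, rfl⟩ : ξ ∈ range (enumBelow (β + 1)) := by
    rw [range_enumBelow hβ1_pos hβ1]
    exact hξ.trans (lt_add_one β)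
  exact mem_iInter.1 hγC n

/-- Unlike the usual diagonal intersection, this one omits `0`, where regressive functions
are not defined. -/
def diagInter (C : Ordinal → Set Ordinal) : Set Ordinal :=
  {β | 0 < β ∧ β < omega1 ∧ ∀ γ < β, β ∈ C γ}

lemma isClubIn_diagInter {C : Ordinal → Set Ordinal} (hC : ∀ γ < omega1, IsClubIn omega1 (C γ)) :
    IsClubIn omega1 (diagInter C) := by
  refine ⟨fun β hβ => hβ.2.1, fun D hD hne hlt => ?_, fun β hβ => ?_⟩
  · have hbdd : BddAbove D := ⟨omega1, fun y hy => (hD hy).2.1.le⟩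
    obtain ⟨x, hx⟩ := hne
    refine ⟨(hD hx).1.trans_le (le_csSup hbdd hx), hlt, fun γ hγ => ?_⟩
    obtain ⟨y, hyD, hγy⟩ := exists_lt_of_lt_csSup ⟨x, hx⟩ hγ
    refine (hC γ (hγ.trans hlt)).sSup_mem_of_cofinal ⟨x, hx⟩ hlt fun z hz => ?_
    rcases le_or_gt z γ with hzγ | hγz
    · exact ⟨y, ⟨hyD, (hD hyD).2.2 γ hγy⟩, hzγ.trans hγy.le⟩
    · exact ⟨z, ⟨hz, (hD hz).2.2 γ hγz⟩, le_rfl⟩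
  obtain ⟨x, rfl, hx⟩ := exists_seq_of_forall_exists_gt
    (fun _ _ hβ => exists_gt_forall_mem_of_isClubIn hC hβ) hβ
  have hmono : Monotone x := (strictMono_nat_of_lt_succ fun k => (hx k).2.1).monotone
  have hbdd := bddAbove_range_of_lt_omega1 fun k => (hx k).1
  have hx0 : x 0 < ⨆ k, x k := (hx 0).2.1.trans_le (le_ciSup hbdd 1)
  refine ⟨⨆ k, x k, ⟨zero_le.trans_lt hx0, iSup_lt_omega1 fun k => (hx k).1, fun γ hγ => ?_⟩,
    hx0⟩
  obtain ⟨k, hγk⟩ := exists_lt_of_lt_ciSup hγ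
  refine (hC γ (hγ.trans (iSup_lt_omega1 fun k => (hx k).1))).iSup_mem hmono
    (fun k => (hx k).1) fun m => ⟨max k m + 1, by omega, ?_⟩
  exact (hx _).2.2 γ (hγk.trans_le (hmono (le_max_left k m)))

/-- Fodor's pressing down lemma on `ω₁`. -/
theorem IsStationaryIn.exists_isStationaryIn_inter_preimage {A : Set Ordinal}
    (hA : IsStationaryIn omega1 A) {f : Ordinal → Ordinal} (hf : ∀ β, 0 < β → f β < β) :
    ∃ c, IsStationaryIn omega1 (A ∩ f ⁻¹' {c}) := by
  by_contra! hne
  have hclub : ∀ c, ∃ C, IsClubIn omega1 C ∧ A ∩ f ⁻¹' {c} ∩ C = ∅ := fun c => by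
    simpa [IsStationaryIn, inter_subset_left.trans hA.1, ← not_nonempty_iff_eq_empty] using hne c
  choose C hC hdisj using hclub
  obtain ⟨β, hβA, hβ_pos, -, hβC⟩ := hA.2 _ (isClubIn_diagInter fun γ _ => hC γ)
  exact (hdisj (f β)).subset ⟨⟨hβA, rfl⟩, hβC _ (hf β hβ_pos)⟩

theorem emptyWinsPD_of_subset_Iio {ζ : Ordinal} (hζ : Ordinal.omega0 < ζ) {S : Set Ordinal}
    (hS : S ⊆ Iio omega1) : EmptyWinsPD ζ (NSIdeal omega1) S := by
  refine ⟨fun α _ β => enumBelow β α.card.toNat, fun _ _ _ _ => rfl,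
    fun α _ β hβ => enumBelow_lt hβ _, fun T hT => ?_⟩
  obtain ⟨hTS, hT_sub, -⟩ := hT _ hζ
  refine ⟨_, hζ, mem_NSIdeal_of_forall_exists_enumBelow_eq (hTS.trans hS) fun n => ?_⟩
  obtain ⟨-, -, c, hc⟩ := hT n ((Ordinal.natCast_lt_omega0 n).trans hζ)
  exact ⟨c, fun β hβ => by simpa using hc β (hT_sub n (Ordinal.natCast_lt_omega0 n) hβ)⟩

open Classical in
def homogeneousPart (n : ℕ) (A : Set Ordinal) : Set Ordinal :=
  if h : IsStationaryIn omega1 A then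
    A ∩ (enumBelow · n) ⁻¹'
      {(h.exists_isStationaryIn_inter_preimage fun _ hβ => enumBelow_lt hβ n).choose}
  else ∅

lemma homogeneousPart_subset (n : ℕ) (A : Set Ordinal) : homogeneousPart n A ⊆ A := by
  unfold homogeneousPart
  split_ifs
  exacts [inter_subset_left, empty_subset A]

lemma IsStationaryIn.homogeneousPart {A : Set Ordinal} (h : IsStationaryIn omega1 A) (n : ℕ) :
    IsStationaryIn omega1 (homogeneousPart n A) := by
  rw [BMPDGames.homogeneousPart, dif_pos h]
  exact (h.exists_isStationaryIn_inter_preimage fun _ hβ => enumBelow_lt hβ n).choose_spec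

lemma exists_enumBelow_eq_of_mem_homogeneousPart (n : ℕ) (A : Set Ordinal) :
    ∃ c, ∀ β ∈ homogeneousPart n A, enumBelow β n = c := by
  unfold homogeneousPart
  split_ifs
  exacts [⟨_, fun β hβ => hβ.2⟩, ⟨0, fun β hβ => hβ.elim⟩]

def bmStrategy (S : Set Ordinal) : ℕ → (ℕ → Set Ordinal) → Set Ordinal
  | 0, _ => homogeneousPart 0 S
  | n + 1, T => homogeneousPart (n + 1) (T n ∩ bmStrategy S n T)

section bmStrategy

variable {S : Set Ordinal} {T : ℕ → Set Ordinal}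

lemma bmStrategy_congr {T' : ℕ → Set Ordinal} {n : ℕ} (h : ∀ m < n, T m = T' m) :
    bmStrategy S n T = bmStrategy S n T' := by
  induction n with
  | zero => rfl
  | succ n ih =>
    simp only [bmStrategy, h n n.lt_succ_self, ih fun m hm => h m (hm.trans n.lt_succ_self)]

lemma bmStrategy_succ_subset (n : ℕ) : bmStrategy S (n + 1) T ⊆ T n ∩ bmStrategy S n T :=
  homogeneousPart_subset _ _

lemma bmStrategy_antitone : Antitone (bmStrategy S · T) :=
  antitone_nat_of_succ_le fun n => (bmStrategy_succ_subset n).trans inter_subset_right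

lemma bmStrategy_subset (n : ℕ) : bmStrategy S n T ⊆ S :=
  (bmStrategy_antitone n.zero_le).trans (homogeneousPart_subset 0 S)

lemma bmStrategy_subset_of_lt {m n : ℕ} (h : m < n) : bmStrategy S n T ⊆ T m :=
  (bmStrategy_antitone h).trans ((bmStrategy_succ_subset m).trans inter_subset_left)

lemma exists_enumBelow_eq_of_mem_bmStrategy (n : ℕ) :
    ∃ c, ∀ β ∈ bmStrategy S n T, enumBelow β n = c := by
  cases n <;> exact exists_enumBelow_eq_of_mem_homogeneousPart _ _

lemma isStationaryIn_bmStrategy (hS : IsStationaryIn omega1 S) {n : ℕ}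
    (hT : ∀ m < n, T m ∉ NSIdeal omega1 ∧ T m ⊆ bmStrategy S m T) :
    IsStationaryIn omega1 (bmStrategy S n T) := by
  cases n with
  | zero => exact hS.homogeneousPart 0
  | succ n =>
    obtain ⟨hTn, hTn_sub⟩ := hT n n.lt_succ_self
    rw [bmStrategy, inter_eq_left.2 hTn_sub]
    exact ((notMem_NSIdeal_iff (hTn_sub.trans ((bmStrategy_subset n).trans hS.1))).1 hTn)
      |>.homogeneousPart _

theorem emptyBMOmegaStratWins_bmStrategy (hS : IsStationaryIn omega1 S) :
    EmptyBMOmegaStratWins (NSIdeal omega1) S (bmStrategy S) := by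
  refine ⟨fun _ _ _ => bmStrategy_congr, fun T => ⟨fun n hT => ⟨?_, bmStrategy_subset n,
    fun m => bmStrategy_subset_of_lt⟩, fun _ => ?_⟩⟩
  · exact (notMem_NSIdeal_iff ((bmStrategy_subset n).trans hS.1)).2
      (isStationaryIn_bmStrategy hS hT)
  · refine mem_NSIdeal_of_forall_exists_enumBelow_eq
      ((iInter_subset _ 0).trans ((bmStrategy_subset 0).trans hS.1)) fun n => ?_
    obtain ⟨c, hc⟩ := exists_enumBelow_eq_of_mem_bmStrategy (S := S) (T := T) n
    exact ⟨c, fun β hβ => hc β (mem_iInter.1 hβ n)⟩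

end bmStrategy

/-- For every stationary `S ⊆ ω₁`, empty wins the pressing down game
`PD_{≤ω}(NS,S)` and empty wins the Banach–Mazur game `BM_{≤ω}(NS,S)`, where `NS` is the
nonstationary ideal on `ω₁`. -/
theorem statement16 (S : Set Ordinal) (hS : IsStationaryIn omega1 S) :
    EmptyWinsPD (Ordinal.omega0 + 1) (NSIdeal omega1) S ∧
    EmptyWinsBMOmega (NSIdeal omega1) S :=
  ⟨emptyWinsPD_of_subset_Iio (lt_add_one _) hS.1,
    bmStrategy S, emptyBMOmegaStratWins_bmStrategy hS⟩

end BMPDGames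
end
end
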